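/- arXiv:2407.04654 — 6 statements merged into one kernel-verified Lean document; each statement's English description precedes it below -/
import Mathlib

section
/- Let Y and Y' be independent exponential random variables with rate 1, and let t > 0. Then E[exp(-t·Y·Y')] ≤ log(1+t)/t. -/
/-!
Integrating out `Y'` first gives `E[exp(-tYY') | Y] = 1 / (1 + tY)`. Since `1 - e^{-y} ≤ y`, this is
at most `1 / (1 + t(1 - e^{-Y}))`, and `1 - e^{-Y}` is uniform on `[0, 1]`, so the expectation of the
bound is `∫₀¹ du / (1 + tu) = log(1 + t) / t`.
-/

open MeasureTheory ProbabilityTheory Real Set Filter Topology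

namespace ProbabilityTheory

lemma ae_nonneg_expMeasure (r : ℝ) : ∀ᵐ x ∂expMeasure r, 0 ≤ x := by
  rw [expMeasure, gammaMeasure,
    ae_withDensity_iff (f := gammaPDF 1 r) (measurable_gammaPDFReal 1 r).ennreal_ofReal]
  refine Eventually.of_forall fun x hx => ?_
  by_contra! hneg
  exact hx (gammaPDF_of_neg hneg)

lemma integral_expMeasure {r : ℝ} (hr : 0 < r) (g : ℝ → ℝ) :
    ∫ x, g x ∂expMeasure r = ∫ x in Ioi 0, r * exp (-(r * x)) * g x := by
  rw [expMeasure, gammaMeasure, integral_withDensity_eq_integral_toReal_smul (f := gammaPDF 1 r)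
    (measurable_gammaPDFReal 1 r).ennreal_ofReal (Eventually.of_forall fun _ => ENNReal.ofReal_lt_top),
    ← integral_Ici_eq_integral_Ioi, ← integral_indicator measurableSet_Ici]
  congr 1 with x
  by_cases hx : 0 ≤ x
  · simp [gammaPDF_of_nonneg hx, indicator_of_mem (mem_Ici.2 hx), ENNReal.toReal_ofReal,
      hr.le, (exp_pos _).le]
  · simp [gammaPDF_of_neg (not_le.1 hx), indicator_of_notMem (show x ∉ Ici 0 from hx)]

lemma integral_exp_neg_mul_expMeasure {r s : ℝ} (hr : 0 < r) (hs : 0 < r + s) :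
    ∫ y, exp (-(s * y)) ∂expMeasure r = r / (r + s) := by
  have hcomb : ∀ y, r * exp (-(r * y)) * exp (-(s * y)) = r * exp (-(r + s) * y) := fun y => by
    rw [mul_assoc, ← exp_add]; ring_nf
  simp_rw [integral_expMeasure hr, hcomb, integral_const_mul,
    integral_exp_mul_Ioi (neg_neg_of_pos hs) 0]
  field_simp
  simp

lemma IndepFun.integral_comp_eq_integral_integral {Ω β β' E : Type*} [MeasurableSpace Ω]
    [MeasurableSpace β] [MeasurableSpace β'] [NormedAddCommGroup E] [NormedSpace ℝ E]
    {μ : Measure Ω} [IsFiniteMeasure μ] {X : Ω → β} {Y : Ω → β'} (hXY : IndepFun X Y μ)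
    (hX : Measurable X) (hY : Measurable Y) {f : β × β' → E}
    (hf : Integrable f ((μ.map X).prod (μ.map Y))) :
    ∫ ω, f (X ω, Y ω) ∂μ = ∫ x, ∫ y, f (x, y) ∂μ.map Y ∂μ.map X := by
  have hmap := hXY.map_prod_eq_prod_map_map hX.aemeasurable hY.aemeasurable
  rw [← integral_prod f hf, ← hmap, integral_map (hX.prodMk hY).aemeasurable (hmap ▸ hf.1)]

end ProbabilityTheory

lemma one_le_one_add_mul_one_sub_exp_neg {t x : ℝ} (ht : 0 ≤ t) (hx : 0 ≤ x) :
    1 ≤ 1 + t * (1 - exp (-x)) := by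
  have : exp (-x) ≤ 1 := exp_le_one_iff.2 (neg_nonpos.2 hx)
  nlinarith

lemma integral_Ioi_exp_neg_div_one_add_mul_one_sub_exp_neg {t : ℝ} (ht : 0 < t) :
    ∫ x in Ioi 0, exp (-x) / (1 + t * (1 - exp (-x))) = log (1 + t) / t := by
  have hderiv : ∀ x ∈ Ici (0 : ℝ), HasDerivAt (fun x => log (1 + t * (1 - exp (-x))) / t)
      (exp (-x) / (1 + t * (1 - exp (-x)))) x := fun x hx => by
    have hpos := one_le_one_add_mul_one_sub_exp_neg ht.le hx
    have hu : HasDerivAt (fun x => 1 + t * (1 - exp (-x))) (t * exp (-x)) x := by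
      simpa using (((hasDerivAt_neg x).exp.const_sub 1).const_mul t).const_add 1
    refine ((hu.log (by positivity)).div_const t).congr_deriv ?_
    field_simp
  have hlim : Tendsto (fun x => log (1 + t * (1 - exp (-x))) / t) atTop
      (𝓝 (log (1 + t) / t)) := by
    have := ((tendsto_exp_neg_atTop_nhds_zero.const_sub 1).const_mul t).const_add 1
    simp only [sub_zero, mul_one] at this
    exact ((continuousAt_log (by positivity)).tendsto.comp this).div_const t
  rw [integral_Ioi_of_hasDerivAt_of_nonneg' hderiv (fun x hx => by
    have := one_le_one_add_mul_one_sub_exp_neg ht.le (le_of_lt hx); positivity) hlim]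
  simp

lemma integral_one_div_one_add_mul_expMeasure_le {t : ℝ} (ht : 0 < t) :
    ∫ x, 1 / (1 + t * x) ∂expMeasure 1 ≤ log (1 + t) / t := by
  have hν := ae_nonneg_expMeasure 1
  have : IsProbabilityMeasure (expMeasure 1) := isProbabilityMeasure_expMeasure one_pos
  have hbound : Integrable (fun x => 1 / (1 + t * (1 - exp (-x)))) (expMeasure 1) := by
    refine .of_bound (Measurable.aestronglyMeasurable (by fun_prop)) 1 ?_
    filter_upwards [hν] with x hx
    have := one_le_one_add_mul_one_sub_exp_neg ht.le hx
    rwa [norm_of_nonneg (by positivity), div_le_one (by positivity)]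
  calc ∫ x, 1 / (1 + t * x) ∂expMeasure 1
      ≤ ∫ x, 1 / (1 + t * (1 - exp (-x))) ∂expMeasure 1 := integral_mono_of_nonneg
        (by filter_upwards [hν] with x hx; positivity) hbound <| by
        filter_upwards [hν] with x hx
        have := one_le_one_add_mul_one_sub_exp_neg ht.le hx
        gcongr
        linarith [one_sub_le_exp_neg x]
    _ = log (1 + t) / t := by
        rw [integral_expMeasure one_pos]
        simp only [one_mul, mul_one_div]
        exact integral_Ioi_exp_neg_div_one_add_mul_one_sub_exp_neg ht

theorem stmt_0 {Ω : Type*} [MeasurableSpace Ω] (μ : Measure Ω) [IsProbabilityMeasure μ]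
    (Y Y' : Ω → ℝ) (hY : Measurable Y) (hY' : Measurable Y')
    (hYd : Measure.map Y μ = expMeasure 1) (hY'd : Measure.map Y' μ = expMeasure 1)
    (hInd : IndepFun Y Y' μ) (t : ℝ) (ht : 0 < t) :
    ∫ ω, Real.exp (-(t * Y ω * Y' ω)) ∂μ ≤ Real.log (1 + t) / t := by
  let ν := expMeasure 1
  have : IsProbabilityMeasure ν := isProbabilityMeasure_expMeasure one_pos
  have hν := ae_nonneg_expMeasure 1
  have hint : Integrable (fun p : ℝ × ℝ => exp (-(t * p.1 * p.2))) (ν.prod ν) := by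
    refine .of_bound (by fun_prop) 1 ?_
    filter_upwards [Measure.quasiMeasurePreserving_fst.ae hν,
      Measure.quasiMeasurePreserving_snd.ae hν] with p hp₁ hp₂
    rw [norm_of_nonneg (exp_pos _).le, exp_le_one_iff, neg_nonpos]
    positivity
  calc ∫ ω, exp (-(t * Y ω * Y' ω)) ∂μ
      = ∫ x, ∫ y, exp (-(t * x * y)) ∂ν ∂ν := by
        have := hInd.integral_comp_eq_integral_integral hY hY' (by rwa [hYd, hY'd])
        rwa [hYd, hY'd] at this
    _ = ∫ x, 1 / (1 + t * x) ∂ν := integral_congr_ae <| by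
        filter_upwards [hν] with x hx
        exact integral_exp_neg_mul_expMeasure one_pos (by positivity)
    _ ≤ log (1 + t) / t := integral_one_div_one_add_mul_expMeasure_le ht
end

section
/- For every x > 0, e^x · ∫_x^∞ e^{-s}/s ds ≤ log(1 + 1/x). -/
/-!
With `E₁ x = ∫_x^∞ e^{-s}/s ds`, the gap `G y = log (1 + 1/y) - e^y E₁ y` satisfies
`G' y = 1/(y+1) - e^y E₁ y`, which is nonpositive by the companion lower bound
`e^{-y}/(y+1) ≤ E₁ y` (integrate `d/ds (-e^{-s}/(s+1)) = e^{-s}(s+2)/(s+1)² ≤ e^{-s}/s`).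
So `G` is antitone on `(0, ∞)`, and it tends to `0` at infinity because `e^y E₁ y ≤ 1/y`;
hence `G ≥ 0`.
-/

open Real MeasureTheory Set Filter Topology

noncomputable def expIntegralE1 (x : ℝ) : ℝ := ∫ s in Ioi x, exp (-s) / s

lemma continuousOn_exp_neg_div : ContinuousOn (fun s : ℝ => exp (-s) / s) (Ioi 0) :=
  (continuous_exp.comp continuous_neg).continuousOn.div continuousOn_id fun _ hs => hs.ne'

lemma integrableOn_exp_neg_div_Ioi {a : ℝ} (ha : 0 < a) :
    IntegrableOn (fun s => exp (-s) / s) (Ioi a) := by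
  refine ((integrableOn_exp_neg_Ioi a).div_const a).mono' ?_ ?_
  · exact (continuousOn_exp_neg_div.mono (Ioi_subset_Ioi ha.le)).aestronglyMeasurable
      measurableSet_Ioi
  · filter_upwards [ae_restrict_mem measurableSet_Ioi] with s hs
    rw [norm_of_nonneg (div_nonneg (exp_pos _).le (ha.trans hs).le)]
    exact div_le_div_of_nonneg_left (exp_pos _).le ha hs.le

lemma expIntegralE1_le_exp_neg_div {x : ℝ} (hx : 0 < x) : expIntegralE1 x ≤ exp (-x) / x :=
  calc expIntegralE1 x ≤ ∫ s in Ioi x, exp (-s) / x :=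
        setIntegral_mono_on (integrableOn_exp_neg_div_Ioi hx)
          ((integrableOn_exp_neg_Ioi x).div_const x) measurableSet_Ioi
          fun _ hs => div_le_div_of_nonneg_left (exp_pos _).le hx (le_of_lt hs)
    _ = exp (-x) / x := by rw [integral_div, integral_exp_neg_Ioi]

lemma exp_neg_div_add_one_le_expIntegralE1 {x : ℝ} (hx : 0 < x) :
    exp (-x) / (x + 1) ≤ expIntegralE1 x := by
  set g : ℝ → ℝ := fun s => -exp (-s) / (s + 1)
  set g' : ℝ → ℝ := fun s => exp (-s) * (s + 2) / (s + 1) ^ 2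
  have hderiv : ∀ s ∈ Ici x, HasDerivAt g (g' s) s := by
    intro s hs
    have hs1 : s + 1 ≠ 0 := by linarith [hx.trans_le hs]
    refine (((hasDerivAt_neg s).exp.neg).div ((hasDerivAt_id s).add_const 1) hs1).congr_deriv ?_
    simp only [g', id, Pi.neg_apply]
    ring
  have hg'_nonneg : ∀ s ∈ Ioi x, 0 ≤ g' s := fun s hs => by
    have := hx.trans hs
    positivity
  have hg_tendsto : Tendsto g atTop (𝓝 0) := by
    simpa using (tendsto_exp_neg_atTop_nhds_zero.neg).div_atTop
      (tendsto_atTop_add_const_right _ 1 tendsto_id)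
  have hg'_le : ∀ s ∈ Ioi x, g' s ≤ exp (-s) / s := fun s hs => by
    have hs0 : 0 < s := hx.trans hs
    rw [div_le_div_iff₀ (by positivity) hs0]
    nlinarith [exp_pos (-s)]
  calc exp (-x) / (x + 1) = ∫ s in Ioi x, g' s := by
        rw [integral_Ioi_of_hasDerivAt_of_nonneg' hderiv hg'_nonneg hg_tendsto]
        simp only [g]
        ring
    _ ≤ expIntegralE1 x :=
        setIntegral_mono_on (integrableOn_Ioi_deriv_of_nonneg' hderiv hg'_nonneg hg_tendsto)
          (integrableOn_exp_neg_div_Ioi hx) measurableSet_Ioi hg'_le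

lemma hasDerivAt_expIntegralE1 {x : ℝ} (hx : 0 < x) :
    HasDerivAt expIntegralE1 (-(exp (-x) / x)) x := by
  have hint := integrableOn_exp_neg_div_Ioi (half_pos hx)
  have hsplit : (fun y => expIntegralE1 (x / 2) - ∫ s in x / 2..y, exp (-s) / s)
      =ᶠ[𝓝 x] expIntegralE1 := by
    filter_upwards [Ioi_mem_nhds (half_lt_self hx)] with y hy
    rw [expIntegralE1, expIntegralE1, ← intervalIntegral.integral_Ioi_sub_Ioi hint hy.le,
      sub_sub_cancel]
  refine HasDerivAt.congr_of_eventuallyEq ?_ hsplit.symm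
  refine (intervalIntegral.integral_hasDerivAt_right ?_ ?_ ?_).const_sub _
  · exact (intervalIntegrable_iff_integrableOn_Ioc_of_le (half_lt_self hx).le).2
      (hint.mono_set Ioc_subset_Ioi_self)
  · exact continuousOn_exp_neg_div.stronglyMeasurableAtFilter isOpen_Ioi x hx
  · exact continuousOn_exp_neg_div.continuousAt (Ioi_mem_nhds hx)

lemma inv_add_one_le_exp_mul_expIntegralE1 {x : ℝ} (hx : 0 < x) :
    1 / (x + 1) ≤ exp x * expIntegralE1 x := by
  have h := mul_le_mul_of_nonneg_left (exp_neg_div_add_one_le_expIntegralE1 hx) (exp_pos x).le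
  rwa [mul_div_assoc', ← exp_add, add_neg_cancel, exp_zero] at h

lemma exp_mul_expIntegralE1_le_inv {x : ℝ} (hx : 0 < x) :
    exp x * expIntegralE1 x ≤ 1 / x := by
  have h := mul_le_mul_of_nonneg_left (expIntegralE1_le_exp_neg_div hx) (exp_pos x).le
  rwa [mul_div_assoc', ← exp_add, add_neg_cancel, exp_zero] at h

lemma hasDerivAt_exp_mul_expIntegralE1 {x : ℝ} (hx : 0 < x) :
    HasDerivAt (fun y => exp y * expIntegralE1 y) (exp x * expIntegralE1 x - 1 / x) x := by
  refine ((hasDerivAt_exp x).mul (hasDerivAt_expIntegralE1 hx)).congr_deriv ?_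
  rw [exp_neg]
  field_simp
  ring

lemma hasDerivAt_log_one_add_inv {x : ℝ} (hx : 0 < x) :
    HasDerivAt (fun y => log (1 + 1 / y)) (-(1 / (x * (x + 1)))) x := by
  have hinner : HasDerivAt (fun y : ℝ => 1 + 1 / y) (-(x ^ 2)⁻¹) x := by
    simpa [one_div] using (hasDerivAt_inv hx.ne').const_add 1
  convert hinner.log (by positivity) using 1
  field_simp

lemma antitoneOn_log_one_add_inv_sub_exp_mul_expIntegralE1 :
    AntitoneOn (fun y => log (1 + 1 / y) - exp y * expIntegralE1 y) (Ioi 0) := by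
  have hderiv : ∀ y ∈ Ioi (0 : ℝ),
      HasDerivAt (fun y => log (1 + 1 / y) - exp y * expIntegralE1 y)
        (1 / (y + 1) - exp y * expIntegralE1 y) y := fun y (hy : 0 < y) => by
    refine ((hasDerivAt_log_one_add_inv hy).sub
      (hasDerivAt_exp_mul_expIntegralE1 hy)).congr_deriv ?_
    field_simp
    ring
  refine antitoneOn_of_hasDerivWithinAt_nonpos
    (f' := fun y => 1 / (y + 1) - exp y * expIntegralE1 y) (convex_Ioi 0)
    (fun y hy => (hderiv y hy).continuousAt.continuousWithinAt) ?_ ?_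
  · rw [interior_Ioi]
    exact fun y hy => (hderiv y hy).hasDerivWithinAt
  · rw [interior_Ioi]
    exact fun y hy => sub_nonpos.2 (inv_add_one_le_exp_mul_expIntegralE1 hy)

lemma tendsto_log_one_add_inv_sub_exp_mul_expIntegralE1 :
    Tendsto (fun y => log (1 + 1 / y) - exp y * expIntegralE1 y) atTop (𝓝 0) := by
  have hinv : Tendsto (fun y : ℝ => 1 / y) atTop (𝓝 0) := by
    simpa only [one_div] using tendsto_inv_atTop_zero
  have hlog : Tendsto (fun y : ℝ => log (1 + 1 / y)) atTop (𝓝 0) := by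
    have h := hinv.const_add 1
    rw [add_zero] at h
    simpa only [log_one] using h.log one_ne_zero
  have hscaled : Tendsto (fun y => exp y * expIntegralE1 y) atTop (𝓝 0) := by
    refine squeeze_zero' ?_ ?_ hinv
    · filter_upwards [eventually_gt_atTop 0] with y hy
      exact (by positivity : (0 : ℝ) ≤ 1 / (y + 1)).trans
        (inv_add_one_le_exp_mul_expIntegralE1 hy)
    · filter_upwards [eventually_gt_atTop 0] with y hy
      exact exp_mul_expIntegralE1_le_inv hy
  simpa using hlog.sub hscaled

theorem stmt_2 (x : ℝ) (hx : 0 < x) :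
    Real.exp x * ∫ s in Set.Ioi x, Real.exp (-s) / s ≤ Real.log (1 + 1 / x) := by
  have hgap : 0 ≤ log (1 + 1 / x) - exp x * expIntegralE1 x :=
    le_of_tendsto tendsto_log_one_add_inv_sub_exp_mul_expIntegralE1 <|
      (eventually_ge_atTop x).mono fun y hxy =>
        antitoneOn_log_one_add_inv_sub_exp_mul_expIntegralE1 hx (hx.trans_le hxy) hxy
  exact sub_nonneg.1 hgap
end

section
/- Let (Z_n)_{n≥0} be a submartingale taking values in [0, K] that converges almost surely and in L² to a limit Z_∞. Then E[Σ_{n≥0} (Z_{n+1} - Z_n)²] ≤ E[Z_∞²] - E[Z_0²] ≤ K². -/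
open MeasureTheory ProbabilityTheory Filter
open scoped ENNReal

/-!
Write `Δₙ = Z (n + 1) - Z n`. Pointwise `Δₙ² = Z (n + 1)² - Z n² - 2 Z n Δₙ`, and conditioning on
`ℱ n` shows `E[Z n Δₙ] = E[Z n · E[Δₙ | ℱ n]] ≥ 0`, since `Z n ≥ 0` and `E[Δₙ | ℱ n] ≥ 0` for a
submartingale. Hence `E[Δₙ²] ≤ E[Z (n + 1)²] - E[Z n²]`; summing telescopes, and the second
moments increase to `E[Zlim²] ≤ K²` by dominated convergence.
-/

namespace MeasureTheory

section Submartingale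

variable {Ω ι : Type*} {m : MeasurableSpace Ω} {μ : Measure Ω} [Preorder ι] {ℱ : Filtration ι m}
  {Z : ι → Ω → ℝ} {i j : ι}

theorem Submartingale.integral_mul_sub_nonneg [SigmaFiniteFiltration μ ℱ]
    (hZ : Submartingale Z ℱ μ) (hij : i ≤ j) (hZi : 0 ≤ᵐ[μ] Z i)
    (hint : Integrable (fun ω => Z i ω * (Z j ω - Z i ω)) μ) :
    0 ≤ ∫ ω, Z i ω * (Z j ω - Z i ω) ∂μ :=
  calc 0 ≤ ∫ ω, Z i ω * μ[Z j - Z i | ℱ i] ω ∂μ := by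
        refine integral_nonneg_of_ae ?_
        filter_upwards [hZi, hZ.condExp_sub_nonneg hij] with ω h₁ h₂ using mul_nonneg h₁ h₂
    _ = ∫ ω, μ[Z i * (Z j - Z i) | ℱ i] ω ∂μ :=
        integral_congr_ae (condExp_mul_of_stronglyMeasurable_left (hZ.stronglyAdapted i) hint
          ((hZ.integrable j).sub (hZ.integrable i))).symm
    _ = ∫ ω, Z i ω * (Z j ω - Z i ω) ∂μ := integral_condExp (ℱ.le i)

theorem Submartingale.integral_sub_sq_le [SigmaFiniteFiltration μ ℱ]
    (hZ : Submartingale Z ℱ μ) (hij : i ≤ j) (hZi : 0 ≤ᵐ[μ] Z i)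
    (hi : MemLp (Z i) 2 μ) (hj : MemLp (Z j) 2 μ) :
    ∫ ω, (Z j ω - Z i ω) ^ 2 ∂μ ≤ ∫ ω, Z j ω ^ 2 ∂μ - ∫ ω, Z i ω ^ 2 ∂μ := by
  have hcross : Integrable (fun ω => Z i ω * (Z j ω - Z i ω)) μ := hi.integrable_mul (hj.sub hi)
  have hexpand : ∫ ω, (Z j ω - Z i ω) ^ 2 ∂μ = ∫ ω, Z j ω ^ 2 ∂μ - ∫ ω, Z i ω ^ 2 ∂μ
      - 2 * ∫ ω, Z i ω * (Z j ω - Z i ω) ∂μ := by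
    have hdiff : Integrable (fun ω => Z j ω ^ 2 - Z i ω ^ 2) μ :=
      hj.integrable_sq.sub hi.integrable_sq
    rw [← integral_sub hj.integrable_sq hi.integrable_sq, ← integral_const_mul,
      ← integral_sub hdiff (hcross.const_mul 2)]
    congr 1 with ω
    ring
  linarith [hZ.integral_mul_sub_nonneg hij hZi hcross]

theorem Submartingale.monotone_integral_sq [SigmaFiniteFiltration μ ℱ]
    (hZ : Submartingale Z ℱ μ) (hZ0 : ∀ i, 0 ≤ᵐ[μ] Z i) (hL2 : ∀ i, MemLp (Z i) 2 μ) :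
    Monotone fun i => ∫ ω, Z i ω ^ 2 ∂μ := fun i j hij => by
  have hsq : 0 ≤ ∫ ω, (Z j ω - Z i ω) ^ 2 ∂μ := integral_nonneg fun ω => sq_nonneg _
  linarith [hZ.integral_sub_sq_le hij (hZ0 i) (hL2 i) (hL2 j)]

end Submartingale

theorem Submartingale.sum_integral_sub_sq_le {Ω : Type*} {m : MeasurableSpace Ω}
    {μ : Measure Ω} {ℱ : Filtration ℕ m} [SigmaFiniteFiltration μ ℱ] {Z : ℕ → Ω → ℝ}
    (hZ : Submartingale Z ℱ μ) (hZ0 : ∀ n, 0 ≤ᵐ[μ] Z n) (hL2 : ∀ n, MemLp (Z n) 2 μ) (N : ℕ) :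
    ∑ n ∈ Finset.range N, ∫ ω, (Z (n + 1) ω - Z n ω) ^ 2 ∂μ
      ≤ ∫ ω, Z N ω ^ 2 ∂μ - ∫ ω, Z 0 ω ^ 2 ∂μ :=
  calc ∑ n ∈ Finset.range N, ∫ ω, (Z (n + 1) ω - Z n ω) ^ 2 ∂μ
      ≤ ∑ n ∈ Finset.range N, (∫ ω, Z (n + 1) ω ^ 2 ∂μ - ∫ ω, Z n ω ^ 2 ∂μ) :=
        Finset.sum_le_sum fun n _ =>
          hZ.integral_sub_sq_le n.le_succ (hZ0 n) (hL2 n) (hL2 (n + 1))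
    _ = ∫ ω, Z N ω ^ 2 ∂μ - ∫ ω, Z 0 ω ^ 2 ∂μ :=
        Finset.sum_range_sub (fun n => ∫ ω, Z n ω ^ 2 ∂μ) N

theorem lintegral_tsum_ofReal_le_of_sum_integral_le {α : Type*} {_ : MeasurableSpace α}
    {μ : Measure α} {f : ℕ → α → ℝ} {c : ℝ} (hf : ∀ n, Integrable (f n) μ)
    (hf0 : ∀ n, 0 ≤ᵐ[μ] f n) (hc : ∀ N, ∑ n ∈ Finset.range N, ∫ x, f n x ∂μ ≤ c) :
    ∫⁻ x, ∑' n, ENNReal.ofReal (f n x) ∂μ ≤ ENNReal.ofReal c := by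
  rw [lintegral_tsum fun n => (hf n).aemeasurable.ennreal_ofReal]
  refine ENNReal.tsum_le_of_sum_range_le fun N => ?_
  simp_rw [← ofReal_integral_eq_lintegral_ofReal (hf _) (hf0 _)]
  rw [← ENNReal.ofReal_sum_of_nonneg fun n _ => integral_nonneg_of_ae (hf0 n)]
  exact ENNReal.ofReal_le_ofReal (hc N)

end MeasureTheory

theorem stmt_11_general {Ω : Type*} {m : MeasurableSpace Ω} (μ : Measure Ω) [IsProbabilityMeasure μ]
    (ℱ : Filtration ℕ m) (Z : ℕ → Ω → ℝ) (K : ℝ)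
    (hZ : Submartingale Z ℱ μ)
    (hZ0 : ∀ n, ∀ᵐ ω ∂μ, 0 ≤ Z n ω)
    (hZK : ∀ n, ∀ᵐ ω ∂μ, Z n ω ≤ K)
    (Zlim : Ω → ℝ)
    (has : ∀ᵐ ω ∂μ, Tendsto (fun n => Z n ω) atTop (nhds (Zlim ω))) :
    (∫⁻ ω, ∑' n : ℕ, ENNReal.ofReal ((Z (n + 1) ω - Z n ω) ^ 2) ∂μ)
        ≤ ENNReal.ofReal ((∫ ω, Zlim ω ^ 2 ∂μ) - ∫ ω, Z 0 ω ^ 2 ∂μ) ∧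
      (∫ ω, Zlim ω ^ 2 ∂μ) - (∫ ω, Z 0 ω ^ 2 ∂μ) ≤ K ^ 2 := by
  have hmeas n : AEStronglyMeasurable (Z n) μ := (hZ.integrable n).aestronglyMeasurable
  have habs n : ∀ᵐ ω ∂μ, ‖Z n ω‖ ≤ K := by
    filter_upwards [hZ0 n, hZK n] with ω h₀ hK
    rwa [Real.norm_of_nonneg h₀]
  have hsq n : ∀ᵐ ω ∂μ, ‖Z n ω ^ 2‖ ≤ K ^ 2 := by
    filter_upwards [habs n] with ω h
    rw [norm_pow]
    exact pow_le_pow_left₀ (norm_nonneg _) h 2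
  have hL2 n : MemLp (Z n) 2 μ := .of_bound (hmeas n) K (habs n)
  have hlim : Tendsto (fun n => ∫ ω, Z n ω ^ 2 ∂μ) atTop (nhds (∫ ω, Zlim ω ^ 2 ∂μ)) :=
    tendsto_integral_of_dominated_convergence (fun _ => K ^ 2) (fun n => (hmeas n).pow 2)
      (integrable_const _) hsq (has.mono fun ω h => h.pow 2)
  have hmono := hZ.monotone_integral_sq hZ0 hL2
  have hlim_le : ∫ ω, Zlim ω ^ 2 ∂μ ≤ K ^ 2 :=
    le_of_tendsto' hlim fun n => by
      simpa using (le_abs_self _).trans (norm_integral_le_of_norm_le_const (hsq n))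
  refine ⟨lintegral_tsum_ofReal_le_of_sum_integral_le
    (fun n => ((hL2 (n + 1)).sub (hL2 n)).integrable_sq)
    (fun n => ae_of_all _ fun ω => sq_nonneg _) fun N => ?_, ?_⟩
  · linarith [hZ.sum_integral_sub_sq_le hZ0 hL2 N, hmono.ge_of_tendsto hlim N]
  · have hsq : 0 ≤ ∫ ω, Z 0 ω ^ 2 ∂μ := integral_nonneg fun ω => sq_nonneg _
    linarith

/-- For a `[0,K]`-valued submartingale converging a.s. and in `L²` to `Zlim`, the expected
sum of squared increments is bounded by `E[Zlim²] - E[Z 0²] ≤ K²`. -/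
theorem stmt_11 {Ω : Type*} {m : MeasurableSpace Ω} (μ : Measure Ω) [IsProbabilityMeasure μ]
    (ℱ : Filtration ℕ m) (Z : ℕ → Ω → ℝ) (K : ℝ)
    (hZ : Submartingale Z ℱ μ)
    (hZ0 : ∀ n, ∀ᵐ ω ∂μ, 0 ≤ Z n ω)
    (hZK : ∀ n, ∀ᵐ ω ∂μ, Z n ω ≤ K)
    (Zlim : Ω → ℝ) (hZlimMeas : Measurable Zlim)
    (has : ∀ᵐ ω ∂μ, Tendsto (fun n => Z n ω) atTop (nhds (Zlim ω)))
    (hL2 : Tendsto (fun n => ∫ ω, (Z n ω - Zlim ω) ^ 2 ∂μ) atTop (nhds 0)) :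
    (∫⁻ ω, ∑' n : ℕ, ENNReal.ofReal ((Z (n + 1) ω - Z n ω) ^ 2) ∂μ)
        ≤ ENNReal.ofReal ((∫ ω, Zlim ω ^ 2 ∂μ) - ∫ ω, Z 0 ω ^ 2 ∂μ) ∧
      (∫ ω, Zlim ω ^ 2 ∂μ) - (∫ ω, Z 0 ω ^ 2 ∂μ) ≤ K ^ 2 :=
  stmt_11_general μ ℱ Z K hZ hZ0 hZK Zlim has
end

section
/- Let γ ∈ (0,1) and η ∈ (-1/2, 0]. Define κ(x) = x^{-γη} and p(x,y) = (min(x,y))^{-γ}·(max(x,y))^{γ-1} for x,y ∈ (0,1]. Then for every y ∈ (0,1], ∫_0^1 p(y,z)/(κ(y)+κ(z)) dz ≤ (1/(1-γ) + 1/(γ + γη))·y^{-γ}. -/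
open MeasureTheory Set

/-- Upper bound for `π(y) = ∫₀¹ p(y,z)/(κ(y)+κ(z)) dz` for the preferential attachment
kernel `p(x,y) = (x ⊓ y)^(-γ) (x ⊔ y)^(γ-1)` and updating rate `κ(x) = x^(-γη)`. -/
theorem stmt_12 (γ η : ℝ) (hγ0 : 0 < γ) (hγ1 : γ < 1) (hη1 : -1/2 < η) (hη2 : η ≤ 0)
    (κ : ℝ → ℝ) (p : ℝ → ℝ → ℝ)
    (hκ : ∀ x : ℝ, κ x = x ^ (-(γ * η)))
    (hp : ∀ x y : ℝ, p x y = min x y ^ (-γ) * max x y ^ (γ - 1)) :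
    ∀ y ∈ Set.Ioc (0 : ℝ) 1,
      (∫ z in (0 : ℝ)..1, p y z / (κ y + κ z))
        ≤ (1 / (1 - γ) + 1 / (γ + γ * η)) * y ^ (-γ) := by
  intro y hy
  obtain ⟨hy0, hy1⟩ := hy
  have h1γ : (0:ℝ) < 1 - γ := by linarith
  have hb : 0 < γ + γ * η := by nlinarith
  have ha1 : (-1:ℝ) < -γ := by linarith
  have hb1 : (-1:ℝ) < γ - 1 + γ * η := by linarith
  set f : ℝ → ℝ := fun z => p y z / (κ y + κ z) with hfdef
  set g : ℝ → ℝ := fun z =>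
    y ^ (γ - 1 + γ * η) * z ^ (-γ) + y ^ (-γ) * z ^ (γ - 1 + γ * η) with hgdef
  -- nonnegativity of f
  have hf0 : ∀ z : ℝ, 0 ≤ z → 0 ≤ f z := by
    intro z hz
    apply div_nonneg
    · rw [hp]
      exact mul_nonneg (Real.rpow_nonneg (le_min hy0.le hz) _)
        (Real.rpow_nonneg (le_max_of_le_left hy0.le) _)
    · exact add_nonneg (by rw [hκ]; exact Real.rpow_nonneg hy0.le _)
        (by rw [hκ]; exact Real.rpow_nonneg hz _)
  -- pointwise bound on [0, y]
  have key1 : ∀ z ∈ Icc (0:ℝ) y, f z ≤ y ^ (γ - 1 + γ * η) * z ^ (-γ) := by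
    intro z hz
    rcases eq_or_lt_of_le hz.1 with rfl | hz0
    · simp only [hfdef, hp, min_eq_right hy0.le,
        Real.zero_rpow (neg_ne_zero.mpr hγ0.ne'), zero_mul, zero_div, mul_zero]
      exact le_refl 0
    · have hκy : 0 < κ y := by rw [hκ]; exact Real.rpow_pos_of_pos hy0 _
      have hκz : 0 ≤ κ z := by rw [hκ]; exact Real.rpow_nonneg hz0.le _
      have hnum : p y z = z ^ (-γ) * y ^ (γ - 1) := by
        rw [hp, min_eq_right hz.2, max_eq_left hz.2]
      have hpn : 0 ≤ p y z := by
        rw [hnum]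
        exact mul_nonneg (Real.rpow_nonneg hz0.le _) (Real.rpow_nonneg hy0.le _)
      calc f z ≤ p y z / κ y := by
            apply div_le_div_of_nonneg_left hpn hκy (le_add_of_nonneg_right hκz)
        _ = y ^ (γ - 1 + γ * η) * z ^ (-γ) := by
            rw [hnum, hκ, Real.rpow_neg hy0.le, Real.rpow_add hy0, div_eq_mul_inv, inv_inv]
            ring
  -- pointwise bound on [y, 1]
  have key2 : ∀ z ∈ Icc y (1:ℝ), f z ≤ y ^ (-γ) * z ^ (γ - 1 + γ * η) := by
    intro z hz
    have hz0 : 0 < z := lt_of_lt_of_le hy0 hz.1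
    have hκz : 0 < κ z := by rw [hκ]; exact Real.rpow_pos_of_pos hz0 _
    have hκy : 0 ≤ κ y := by rw [hκ]; exact Real.rpow_nonneg hy0.le _
    have hnum : p y z = y ^ (-γ) * z ^ (γ - 1) := by
      rw [hp, min_eq_left hz.1, max_eq_right hz.1]
    have hpn : 0 ≤ p y z := by
      rw [hnum]
      exact mul_nonneg (Real.rpow_nonneg hy0.le _) (Real.rpow_nonneg hz0.le _)
    calc f z ≤ p y z / κ z := by
          apply div_le_div_of_nonneg_left hpn hκz (le_add_of_nonneg_left hκy)
      _ = y ^ (-γ) * z ^ (γ - 1 + γ * η) := by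
          rw [hnum, hκ, Real.rpow_neg hz0.le, Real.rpow_add hz0, div_eq_mul_inv, inv_inv]
          ring
  -- pointwise bound on [0, 1]
  have hfg : ∀ z ∈ Icc (0:ℝ) 1, f z ≤ g z := by
    intro z hz
    by_cases hzy : z ≤ y
    · refine le_trans (key1 z ⟨hz.1, hzy⟩) (le_add_of_nonneg_right ?_)
      exact mul_nonneg (Real.rpow_nonneg hy0.le _) (Real.rpow_nonneg hz.1 _)
    · refine le_trans (key2 z ⟨(not_le.mp hzy).le, hz.2⟩) (le_add_of_nonneg_left ?_)
      exact mul_nonneg (Real.rpow_nonneg hy0.le _) (Real.rpow_nonneg hz.1 _)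
  -- integrability
  have hi1 : IntervalIntegrable (fun z : ℝ => z ^ (-γ)) volume 0 1 :=
    intervalIntegral.intervalIntegrable_rpow' ha1
  have hi2 : IntervalIntegrable (fun z : ℝ => z ^ (γ - 1 + γ * η)) volume 0 1 :=
    intervalIntegral.intervalIntegrable_rpow' hb1
  have hgi : IntervalIntegrable g volume 0 1 := (hi1.const_mul _).add (hi2.const_mul _)
  have hmeas : Measurable f := by
    have hfe : f = fun z =>
        ((min y z) ^ (-γ) * (max y z) ^ (γ - 1)) / (y ^ (-(γ * η)) + z ^ (-(γ * η))) :=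
      funext fun z => by rw [hfdef]; simp only [hp, hκ]
    rw [hfe]
    fun_prop
  have hfi : IntervalIntegrable f volume 0 1 := by
    rw [intervalIntegrable_iff_integrableOn_Ioc_of_le zero_le_one]
    refine (hgi.1).mono' hmeas.aestronglyMeasurable.restrict ?_
    filter_upwards [ae_restrict_mem measurableSet_Ioc] with z hz
    rw [Real.norm_eq_abs, abs_of_nonneg (hf0 z hz.1.le)]
    exact hfg z ⟨hz.1.le, hz.2⟩
  -- restrict to subintervals
  have hsub : uIcc (0:ℝ) y ⊆ uIcc (0:ℝ) 1 :=
    uIcc_subset_uIcc left_mem_uIcc (by rw [uIcc_of_le zero_le_one]; exact ⟨hy0.le, hy1⟩)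
  have hsub' : uIcc y (1:ℝ) ⊆ uIcc (0:ℝ) 1 :=
    uIcc_subset_uIcc (by rw [uIcc_of_le zero_le_one]; exact ⟨hy0.le, hy1⟩) right_mem_uIcc
  have hfi1 : IntervalIntegrable f volume 0 y := hfi.mono_set hsub
  have hfi2 : IntervalIntegrable f volume y 1 := hfi.mono_set hsub'
  have hi1y : IntervalIntegrable (fun z : ℝ => z ^ (-γ)) volume 0 y := hi1.mono_set hsub
  have hi2y : IntervalIntegrable (fun z : ℝ => z ^ (γ - 1 + γ * η)) volume y 1 :=
    hi2.mono_set hsub'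
  -- split the integral
  have hsplit : (∫ z in (0:ℝ)..1, f z) = (∫ z in (0:ℝ)..y, f z) + ∫ z in y..1, f z :=
    (intervalIntegral.integral_add_adjacent_intervals hfi1 hfi2).symm
  -- bound on first piece
  have b1 : (∫ z in (0:ℝ)..y, f z) ≤ y ^ (γ * η) * (1 / (1 - γ)) := by
    calc (∫ z in (0:ℝ)..y, f z)
        ≤ ∫ z in (0:ℝ)..y, y ^ (γ - 1 + γ * η) * z ^ (-γ) :=
          intervalIntegral.integral_mono_on hy0.le hfi1 (hi1y.const_mul _) key1
      _ = y ^ (γ - 1 + γ * η) * ((y ^ (-γ + 1) - (0:ℝ) ^ (-γ + 1)) / (-γ + 1)) := by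
          rw [intervalIntegral.integral_const_mul, integral_rpow (Or.inl ha1)]
      _ = y ^ (γ * η) * (1 / (1 - γ)) := by
          rw [Real.zero_rpow (by intro h; linarith : -γ + 1 ≠ 0), sub_zero,
            ← mul_div_assoc, ← Real.rpow_add hy0,
            show γ - 1 + γ * η + (-γ + 1) = γ * η by ring]
          rw [mul_one_div, show -γ + 1 = 1 - γ by ring]
  -- bound on second piece
  have b2 : (∫ z in y..1, f z) ≤ y ^ (-γ) * (1 / (γ + γ * η)) := by
    have int2 : (∫ z in y..1, z ^ (γ - 1 + γ * η)) ≤ 1 / (γ + γ * η) := by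
      rw [integral_rpow (Or.inl hb1), Real.one_rpow,
        show γ - 1 + γ * η + 1 = γ + γ * η by ring]
      gcongr
      exact sub_le_self 1 (Real.rpow_nonneg hy0.le _)
    calc (∫ z in y..1, f z)
        ≤ ∫ z in y..1, y ^ (-γ) * z ^ (γ - 1 + γ * η) :=
          intervalIntegral.integral_mono_on hy1 hfi2 (hi2y.const_mul _) key2
      _ = y ^ (-γ) * ∫ z in y..1, z ^ (γ - 1 + γ * η) :=
          intervalIntegral.integral_const_mul _ _
      _ ≤ y ^ (-γ) * (1 / (γ + γ * η)) :=
          mul_le_mul_of_nonneg_left int2 (Real.rpow_nonneg hy0.le _)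
  -- conclude
  have hy' : y ^ (γ * η) ≤ y ^ (-γ) :=
    Real.rpow_le_rpow_of_exponent_ge hy0 hy1 (by nlinarith)
  have b1' : y ^ (γ * η) * (1 / (1 - γ)) ≤ y ^ (-γ) * (1 / (1 - γ)) := by
    apply mul_le_mul_of_nonneg_right hy' (by positivity)
  calc (∫ z in (0:ℝ)..1, f z) = (∫ z in (0:ℝ)..y, f z) + ∫ z in y..1, f z := hsplit
    _ ≤ y ^ (γ * η) * (1 / (1 - γ)) + y ^ (-γ) * (1 / (γ + γ * η)) := add_le_add b1 b2
    _ ≤ y ^ (-γ) * (1 / (1 - γ)) + y ^ (-γ) * (1 / (γ + γ * η)) := add_le_add b1' le_rfl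
    _ = (1 / (1 - γ) + 1 / (γ + γ * η)) * y ^ (-γ) := by ring
end

section
/- Let γ ∈ (0,1) and let Λ: (0,1) → (0,∞) be measurable with c₁·x^{-γ} ≤ Λ(x) ≤ c₂·x^{-γ} for constants 0 < c₁ < c₂ and all x ∈ (0,1). Let D be a mixed Poisson random variable: conditionally on U uniform on (0,1), D is Poisson with parameter Λ(U). Then lim_{k→∞} log P(D ≥ k) / log k = -1/γ. -/
/-!
The Chernoff bounds `P(N ≥ k) ≤ exp (l (eˢ - 1) - s k)` and `P(N < k) ≤ exp (l (e⁻ˢ - 1) + s k)`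
for `N ~ Poisson(l)` show that the Poisson tail is at least `1/2` once `l ≥ 4k` and at most
`e^{-k/2}` once `4l ≤ k`. As `Λ(x) ≍ x^{-γ}`, the first happens for `x ≲ k^{-1/γ}` and the second
for `x ≳ k^{-1/γ}`, so `P(D ≥ k) = ∫₀¹ P(Poisson(Λ x) ≥ k) dx` lies between two constant
multiples of `k^{-1/γ}`.
-/

open Real Set Filter Topology MeasureTheory

noncomputable def poissonProb (l : ℝ) (n : ℕ) : ℝ := exp (-l) * l ^ n / n.factorial

noncomputable def poissonTail (l : ℝ) (k : ℕ) : ℝ := ∑' n : ℕ, if k ≤ n then poissonProb l n else 0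

lemma poissonProb_nonneg {l : ℝ} (hl : 0 ≤ l) (n : ℕ) : 0 ≤ poissonProb l n := by
  unfold poissonProb; positivity

lemma hasSum_poissonProb_mul_exp (l s : ℝ) :
    HasSum (fun n : ℕ => poissonProb l n * exp (s * n)) (exp (l * (exp s - 1))) := by
  have h := (NormedSpace.expSeries_div_hasSum_exp (l * exp s)).mul_left (exp (-l))
  rw [← exp_eq_exp_ℝ, ← exp_add, show -l + l * exp s = l * (exp s - 1) by ring] at h
  refine h.congr_fun fun n => ?_
  rw [poissonProb, mul_comm s, exp_nat_mul, mul_pow]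
  ring

lemma hasSum_poissonProb (l : ℝ) : HasSum (poissonProb l) 1 := by
  simpa using hasSum_poissonProb_mul_exp l 0

lemma hasSum_poissonTail (l : ℝ) (k : ℕ) :
    HasSum (fun n => if k ≤ n then poissonProb l n else 0)
      (1 - ∑ n ∈ Finset.range k, poissonProb l n) := by
  have hhead : HasSum (fun n => if k ≤ n then 0 else poissonProb l n)
      (∑ n ∈ Finset.range k, if k ≤ n then 0 else poissonProb l n) :=
    hasSum_sum_of_ne_finset_zero (by simp +contextual)
  rw [Finset.sum_ite_of_false fun n hn => by simpa using hn] at hhead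
  refine ((hasSum_poissonProb l).sub hhead).congr_fun fun n => ?_
  split_ifs <;> simp

lemma poissonTail_eq_one_sub (l : ℝ) (k : ℕ) :
    poissonTail l k = 1 - ∑ n ∈ Finset.range k, poissonProb l n :=
  (hasSum_poissonTail l k).tsum_eq

lemma continuous_poissonTail (k : ℕ) : Continuous fun l => poissonTail l k := by
  simp_rw [poissonTail_eq_one_sub, poissonProb]
  fun_prop

lemma poissonTail_le_exp {l : ℝ} (hl : 0 ≤ l) (k : ℕ) {s : ℝ} (hs : 0 ≤ s) :
    poissonTail l k ≤ exp (l * (exp s - 1) - s * k) := by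
  rw [sub_eq_add_neg, exp_add, ← (hasSum_poissonProb_mul_exp l s).tsum_eq, ← tsum_mul_right]
  refine (hasSum_poissonTail l k).summable.tsum_le_tsum (fun n => ?_)
    ((hasSum_poissonProb_mul_exp l s).summable.mul_right _)
  split_ifs with hkn
  · rw [mul_assoc, ← exp_add]
    refine le_mul_of_one_le_right (poissonProb_nonneg hl n) (one_le_exp ?_)
    have : (k : ℝ) ≤ n := by exact_mod_cast hkn
    nlinarith
  · exact mul_nonneg (mul_nonneg (poissonProb_nonneg hl n) (exp_pos _).le) (exp_pos _).le

lemma sum_range_poissonProb_le_exp {l : ℝ} (hl : 0 ≤ l) (k : ℕ) {s : ℝ} (hs : 0 ≤ s) :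
    ∑ n ∈ Finset.range k, poissonProb l n ≤ exp (l * (exp (-s) - 1) + s * k) := by
  rw [exp_add, ← (hasSum_poissonProb_mul_exp l (-s)).tsum_eq, ← tsum_mul_right]
  refine (Finset.sum_le_sum fun n hn => ?_).trans
    (((hasSum_poissonProb_mul_exp l (-s)).summable.mul_right _).sum_le_tsum _ fun n _ => ?_)
  swap
  · exact mul_nonneg (mul_nonneg (poissonProb_nonneg hl n) (exp_pos _).le) (exp_pos _).le
  rw [mul_assoc, ← exp_add]
  refine le_mul_of_one_le_right (poissonProb_nonneg hl n) (one_le_exp ?_)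
  have : (n : ℝ) ≤ k := by exact_mod_cast (Finset.mem_range.mp hn).le
  nlinarith

lemma poissonTail_le_exp_neg_half {l : ℝ} (hl : 0 ≤ l) {k : ℕ} (hlk : 4 * l ≤ k) :
    poissonTail l k ≤ exp (-(1 / 2) * k) := by
  refine (poissonTail_le_exp hl k zero_le_one).trans (exp_le_exp.mpr ?_)
  have : exp 1 - 1 ≤ 2 := by linarith [exp_one_lt_three]
  nlinarith

lemma half_le_poissonTail {l : ℝ} {k : ℕ} (hk : 1 ≤ k) (hlk : 4 * k ≤ l) :
    1 / 2 ≤ poissonTail l k := by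
  have hk' : (1 : ℝ) ≤ k := by exact_mod_cast hk
  have hl : 0 ≤ l := by linarith
  have hhead := sum_range_poissonProb_le_exp hl k zero_le_one
  have : l * (exp (-1) - 1) + 1 * k ≤ -1 := by nlinarith [exp_neg_one_lt_half.le]
  rw [poissonTail_eq_one_sub]
  linarith [exp_le_exp.mpr this, exp_neg_one_lt_half.le]

lemma poissonTail_nonneg {l : ℝ} (hl : 0 ≤ l) (k : ℕ) : 0 ≤ poissonTail l k :=
  tsum_nonneg fun n => by split_ifs; exacts [poissonProb_nonneg hl n, le_rfl]

lemma poissonTail_le_one {l : ℝ} (hl : 0 ≤ l) (k : ℕ) : poissonTail l k ≤ 1 := by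
  rw [poissonTail_eq_one_sub, sub_le_self_iff]
  exact Finset.sum_nonneg fun n _ => poissonProb_nonneg hl n

lemma mul_le_setIntegral_Ioo_zero_one {f : ℝ → ℝ} {a t : ℝ} (hf : IntegrableOn f (Ioo 0 1))
    (hf0 : ∀ x ∈ Ioo (0 : ℝ) 1, 0 ≤ f x) (ht : 0 ≤ t) (ht1 : t ≤ 1)
    (ha : ∀ x ∈ Ioo 0 t, a ≤ f x) :
    a * t ≤ ∫ x in Ioo 0 1, f x := by
  have hsub : Ioo (0 : ℝ) t ⊆ Ioo 0 1 := Ioo_subset_Ioo_right ht1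
  calc a * t = ∫ _ in Ioo 0 t, a := by
        rw [setIntegral_const, volume_real_Ioo_of_le ht, smul_eq_mul, sub_zero, mul_comm]
    _ ≤ ∫ x in Ioo 0 t, f x :=
        setIntegral_mono_on (integrableOn_const (by simp)) (hf.mono_set hsub) measurableSet_Ioo ha
    _ ≤ ∫ x in Ioo 0 1, f x :=
        setIntegral_mono_set hf ((ae_restrict_iff' measurableSet_Ioo).2 (ae_of_all _ hf0))
          hsub.eventuallyLE

lemma setIntegral_Ioo_zero_one_le {f : ℝ → ℝ} {b t : ℝ} (hf : IntegrableOn f (Ioo 0 1))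
    (hf1 : ∀ x ∈ Ioo (0 : ℝ) 1, f x ≤ 1) (hb : 0 ≤ b) (ht : 0 < t) (ht1 : t ≤ 1)
    (hfb : ∀ x ∈ Ico t 1, f x ≤ b) :
    ∫ x in Ioo 0 1, f x ≤ t + b := by
  have hsub₁ : Ioo (0 : ℝ) t ⊆ Ioo 0 1 := Ioo_subset_Ioo_right ht1
  have hsub₂ : Ico t 1 ⊆ Ioo (0 : ℝ) 1 := fun x hx => ⟨ht.trans_le hx.1, hx.2⟩
  have hdisj : Disjoint (Ioo 0 t) (Ico t 1) :=
    (Iio_disjoint_Ici le_rfl).mono Ioo_subset_Iio_self Ico_subset_Ici_self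
  rw [← Ioo_union_Ico_eq_Ioo ht ht1,
    setIntegral_union hdisj measurableSet_Ico (hf.mono_set hsub₁) (hf.mono_set hsub₂)]
  have h₁ : ∫ x in Ioo 0 t, f x ≤ t := by
    calc ∫ x in Ioo 0 t, f x ≤ ∫ _ in Ioo 0 t, (1 : ℝ) :=
          setIntegral_mono_on (hf.mono_set hsub₁) (integrableOn_const (by simp))
            measurableSet_Ioo fun x hx => hf1 x (hsub₁ hx)
      _ = t := by rw [setIntegral_const, volume_real_Ioo_of_le ht.le, smul_eq_mul, sub_zero, mul_one]
  have h₂ : ∫ x in Ico t 1, f x ≤ b := by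
    calc ∫ x in Ico t 1, f x ≤ ∫ _ in Ico t 1, b :=
          setIntegral_mono_on (hf.mono_set hsub₂) (integrableOn_const (by simp))
            measurableSet_Ico hfb
      _ = (1 - t) * b := by rw [setIntegral_const, volume_real_Ico_of_le ht1, smul_eq_mul]
      _ ≤ b := by nlinarith
  linarith

lemma tendsto_log_mul_rpow_neg_div_log {a : ℝ} (ha : 0 < a) (p : ℝ) :
    Tendsto (fun k : ℕ => log (a * (k : ℝ) ^ (-p)) / log k) atTop (𝓝 (-p)) := by
  have hinv : Tendsto (fun k : ℕ => (log k)⁻¹) atTop (𝓝 0) :=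
    (tendsto_log_atTop.comp tendsto_natCast_atTop_atTop).inv_tendsto_atTop
  have h := (hinv.const_mul (log a)).sub_const p
  rw [mul_zero, zero_sub] at h
  refine h.congr' ?_
  filter_upwards [eventually_gt_atTop 1] with k hk
  have hk' : (1 : ℝ) < k := by exact_mod_cast hk
  have hlog : log k ≠ 0 := (log_pos hk').ne'
  rw [log_mul ha.ne' (rpow_pos_of_pos (by linarith) _).ne', log_rpow (by linarith)]
  field_simp
  ring

lemma tendsto_log_div_log_of_le_of_le {u : ℕ → ℝ} {a b p : ℝ} (ha : 0 < a)
    (hlo : ∀ᶠ k : ℕ in atTop, a * (k : ℝ) ^ (-p) ≤ u k)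
    (hhi : ∀ᶠ k : ℕ in atTop, u k ≤ b * (k : ℝ) ^ (-p)) :
    Tendsto (fun k => log (u k) / log k) atTop (𝓝 (-p)) := by
  have hb : 0 < b := by
    obtain ⟨k, hak, hbk, hk⟩ := (hlo.and (hhi.and (eventually_gt_atTop 0))).exists
    have hkp : 0 < (k : ℝ) ^ (-p) := rpow_pos_of_pos (by exact_mod_cast hk) _
    exact pos_of_mul_pos_left ((mul_pos ha hkp).trans_le (hak.trans hbk)) hkp.le
  refine tendsto_of_tendsto_of_tendsto_of_le_of_le' (tendsto_log_mul_rpow_neg_div_log ha p)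
    (tendsto_log_mul_rpow_neg_div_log hb p) ?_ ?_
  · filter_upwards [hlo, eventually_gt_atTop 0] with k hk hk0
    have : 0 < a * (k : ℝ) ^ (-p) := mul_pos ha (rpow_pos_of_pos (by exact_mod_cast hk0) _)
    exact div_le_div_of_nonneg_right (log_le_log this hk) (log_natCast_nonneg k)
  · filter_upwards [hlo, hhi, eventually_gt_atTop 0] with k hk hk' hk0
    have : 0 < a * (k : ℝ) ^ (-p) := mul_pos ha (rpow_pos_of_pos (by exact_mod_cast hk0) _)
    exact div_le_div_of_nonneg_right (log_le_log (this.trans_le hk) hk') (log_natCast_nonneg k)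

lemma eventually_exp_neg_mul_le_mul_rpow_neg {b C : ℝ} (hb : 0 < b) (hC : 0 < C) (p : ℝ) :
    ∀ᶠ k : ℕ in atTop, exp (-b * k) ≤ C * (k : ℝ) ^ (-p) := by
  filter_upwards [((tendsto_rpow_mul_exp_neg_mul_atTop_nhds_zero p b hb).comp
    tendsto_natCast_atTop_atTop).eventually (gt_mem_nhds hC), eventually_gt_atTop 0] with k hk hk0
  have hkp : 0 < (k : ℝ) ^ p := rpow_pos_of_pos (by exact_mod_cast hk0) p
  rw [rpow_neg (Nat.cast_nonneg k), ← div_eq_mul_inv, le_div_iff₀ hkp, mul_comm]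
  exact hk.le

lemma rpow_inv_rpow_neg {t γ : ℝ} (ht : 0 ≤ t) (hγ : γ ≠ 0) : (t ^ γ⁻¹) ^ (-γ) = t⁻¹ := by
  rw [rpow_neg (rpow_nonneg ht _), rpow_inv_rpow ht hγ]

lemma integrableOn_poissonTail_comp {Λ : ℝ → ℝ} (hΛ : Measurable Λ)
    (hΛ0 : ∀ x ∈ Ioo (0 : ℝ) 1, 0 ≤ Λ x) (k : ℕ) :
    IntegrableOn (fun x => poissonTail (Λ x) k) (Ioo 0 1) := by
  refine Measure.integrableOn_of_bounded (M := 1) (by simp)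
    ((continuous_poissonTail k).measurable.comp hΛ).aestronglyMeasurable
    ((ae_restrict_iff' measurableSet_Ioo).2 (ae_of_all _ fun x hx => ?_))
  rw [Real.norm_of_nonneg (poissonTail_nonneg (hΛ0 x hx) k)]
  exact poissonTail_le_one (hΛ0 x hx) k

section Intensity

variable {γ c₁ c₂ : ℝ} {Λ : ℝ → ℝ}

lemma nonneg_of_mul_rpow_neg_le (hc₁ : 0 ≤ c₁) (hΛlb : ∀ x ∈ Ioo (0 : ℝ) 1, c₁ * x ^ (-γ) ≤ Λ x) :
    ∀ x ∈ Ioo (0 : ℝ) 1, 0 ≤ Λ x := fun x hx =>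
  (mul_nonneg hc₁ (rpow_nonneg hx.1.le _)).trans (hΛlb x hx)

lemma half_mul_rpow_le_integral_poissonTail (hγ : 0 < γ) (hc₁ : 0 < c₁) (hΛ : Measurable Λ)
    (hΛlb : ∀ x ∈ Ioo (0 : ℝ) 1, c₁ * x ^ (-γ) ≤ Λ x) {k : ℕ} (hk : 1 ≤ k) (hck : c₁ ≤ 4 * k) :
    1 / 2 * (c₁ / (4 * k)) ^ γ⁻¹ ≤ ∫ x in Ioo 0 1, poissonTail (Λ x) k := by
  have hΛ0 := nonneg_of_mul_rpow_neg_le hc₁.le hΛlb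
  have hbase : 0 < c₁ / (4 * k) := div_pos hc₁ (by positivity)
  have ht1 : (c₁ / (4 * k)) ^ γ⁻¹ ≤ 1 :=
    rpow_le_one hbase.le ((div_le_one (by positivity)).2 hck) (inv_nonneg.2 hγ.le)
  refine mul_le_setIntegral_Ioo_zero_one (integrableOn_poissonTail_comp hΛ hΛ0 k)
    (fun x hx => poissonTail_nonneg (hΛ0 x hx) k) (rpow_nonneg hbase.le _) ht1 fun x hx => ?_
  refine half_le_poissonTail hk ?_
  calc 4 * (k : ℝ) = c₁ * ((c₁ / (4 * k)) ^ γ⁻¹) ^ (-γ) := by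
        rw [rpow_inv_rpow_neg hbase.le hγ.ne']
        field_simp
    _ ≤ c₁ * x ^ (-γ) :=
        mul_le_mul_of_nonneg_left (rpow_le_rpow_of_nonpos hx.1 hx.2.le (by linarith)) hc₁.le
    _ ≤ Λ x := hΛlb x ⟨hx.1, hx.2.trans_le ht1⟩

lemma integral_poissonTail_le (hγ : 0 < γ) (hc₂ : 0 < c₂) (hΛ : Measurable Λ)
    (hΛ0 : ∀ x ∈ Ioo (0 : ℝ) 1, 0 ≤ Λ x) (hΛub : ∀ x ∈ Ioo (0 : ℝ) 1, Λ x ≤ c₂ * x ^ (-γ))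
    {k : ℕ} (hck : 4 * c₂ ≤ k) :
    ∫ x in Ioo 0 1, poissonTail (Λ x) k ≤ (4 * c₂ / k) ^ γ⁻¹ + exp (-(1 / 2) * k) := by
  have hk : (0 : ℝ) < k := by linarith
  have hbase : 0 < 4 * c₂ / k := by positivity
  have ht1 : (4 * c₂ / k) ^ γ⁻¹ ≤ 1 :=
    rpow_le_one hbase.le ((div_le_one hk).2 hck) (inv_nonneg.2 hγ.le)
  refine setIntegral_Ioo_zero_one_le (integrableOn_poissonTail_comp hΛ hΛ0 k)
    (fun x hx => poissonTail_le_one (hΛ0 x hx) k) (exp_pos _).le (rpow_pos_of_pos hbase _) ht1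
    fun x hx => ?_
  have hx0 : 0 < x := (rpow_pos_of_pos hbase _).trans_le hx.1
  refine poissonTail_le_exp_neg_half (hΛ0 x ⟨hx0, hx.2⟩) ?_
  calc 4 * Λ x ≤ 4 * (c₂ * x ^ (-γ)) := by gcongr; exact hΛub x ⟨hx0, hx.2⟩
    _ ≤ 4 * (c₂ * ((4 * c₂ / k) ^ γ⁻¹) ^ (-γ)) := by
        have := rpow_le_rpow_of_nonpos (rpow_pos_of_pos hbase _) hx.1 (neg_nonpos.2 hγ.le)
        gcongr
    _ = k := by
        rw [rpow_inv_rpow_neg hbase.le hγ.ne']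
        field_simp

end Intensity

theorem stmt_14_general {Ω : Type*} [MeasurableSpace Ω] (P : Measure Ω)
    (γ : ℝ) (hγ0 : 0 < γ)
    (Λ : ℝ → ℝ) (hΛmeas : Measurable Λ)
    (c₁ c₂ : ℝ) (hc₁ : 0 < c₁) (hc₁c₂ : c₁ < c₂)
    (hΛlb : ∀ x ∈ Set.Ioo (0 : ℝ) 1, c₁ * x ^ (-γ) ≤ Λ x)
    (hΛub : ∀ x ∈ Set.Ioo (0 : ℝ) 1, Λ x ≤ c₂ * x ^ (-γ))
    (D : Ω → ℕ)
    (hD : ∀ k : ℕ, P {ω | k ≤ D ω}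
      = ENNReal.ofReal (∫ x in Set.Ioo (0 : ℝ) 1,
          ∑' n : ℕ, if k ≤ n then Real.exp (-Λ x) * Λ x ^ n / (n.factorial : ℝ) else 0)) :
    Tendsto (fun k : ℕ => Real.log (P {ω | k ≤ D ω}).toReal / Real.log k)
      atTop (nhds (-(1 / γ))) := by
  have hc₂ : 0 < c₂ := hc₁.trans hc₁c₂
  have hΛ0 := nonneg_of_mul_rpow_neg_le hc₁.le hΛlb
  have hP : ∀ k : ℕ, (P {ω | k ≤ D ω}).toReal = ∫ x in Ioo 0 1, poissonTail (Λ x) k := fun k =>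
    (congrArg ENNReal.toReal (hD k)).trans (ENNReal.toReal_ofReal
      (setIntegral_nonneg measurableSet_Ioo fun x hx => poissonTail_nonneg (hΛ0 x hx) k))
  have hscale : ∀ {c : ℝ}, 0 ≤ c → ∀ k : ℕ, (c / k) ^ γ⁻¹ = c ^ γ⁻¹ * (k : ℝ) ^ (-(1 / γ)) :=
    fun hc k => by rw [div_rpow hc k.cast_nonneg, rpow_neg k.cast_nonneg, one_div, div_eq_mul_inv]
  simp_rw [hP]
  refine tendsto_log_div_log_of_le_of_le (a := 1 / 2 * (c₁ / 4) ^ γ⁻¹)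
    (b := 2 * (4 * c₂) ^ γ⁻¹) (by positivity) ?_ ?_
  · filter_upwards [eventually_ge_atTop 1,
      tendsto_natCast_atTop_atTop.eventually_ge_atTop (c₁ / 4)] with k hk hck
    have h := half_mul_rpow_le_integral_poissonTail hγ0 hc₁ hΛmeas hΛlb hk (by linarith)
    rwa [div_mul_eq_div_div, hscale (by positivity), ← mul_assoc] at h
  · filter_upwards [tendsto_natCast_atTop_atTop.eventually_ge_atTop (4 * c₂),
      eventually_exp_neg_mul_le_mul_rpow_neg one_half_pos
        (rpow_pos_of_pos (by positivity : 0 < 4 * c₂) γ⁻¹)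
        (1 / γ)] with k hck hexp
    have h := integral_poissonTail_le hγ0 hc₂ hΛmeas hΛ0 hΛub hck
    rw [hscale (by positivity)] at h
    linarith

/-- A mixed Poisson random variable whose mixing intensity `Λ(x)` is comparable to `x^(-γ)`
has a power-law tail: `log P(D ≥ k) / log k → -1/γ`. -/
theorem stmt_14 {Ω : Type*} [MeasurableSpace Ω] (P : Measure Ω) [IsProbabilityMeasure P]
    (γ : ℝ) (hγ0 : 0 < γ) (hγ1 : γ < 1)
    (Λ : ℝ → ℝ) (hΛmeas : Measurable Λ)
    (c₁ c₂ : ℝ) (hc₁ : 0 < c₁) (hc₁c₂ : c₁ < c₂)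
    (hΛlb : ∀ x ∈ Set.Ioo (0 : ℝ) 1, c₁ * x ^ (-γ) ≤ Λ x)
    (hΛub : ∀ x ∈ Set.Ioo (0 : ℝ) 1, Λ x ≤ c₂ * x ^ (-γ))
    (D : Ω → ℕ) (hDmeas : Measurable D)
    (hD : ∀ k : ℕ, P {ω | k ≤ D ω}
      = ENNReal.ofReal (∫ x in Set.Ioo (0 : ℝ) 1,
          ∑' n : ℕ, if k ≤ n then Real.exp (-Λ x) * Λ x ^ n / (n.factorial : ℝ) else 0)) :
    Tendsto (fun k : ℕ => Real.log (P {ω | k ≤ D ω}).toReal / Real.log k)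
      atTop (nhds (-(1 / γ))) :=
  stmt_14_general P γ hγ0 Λ hΛmeas c₁ c₂ hc₁ hc₁c₂ hΛlb hΛub D hD
end

section
/- Let θ, λ, s > 0, c > 0, C > 0, let (p_j)_{j∈J} be numbers in [0,1] and (s_j)_{j∈J} nonnegative numbers indexed by a finite set J with Σ_j λ·p_j·s_j ≤ s/c. Let (C_j)_{j∈J} be independent Bernoulli random variables with parameters p_j, and let (X_j)_{j∈J} be nonnegative random variables, independent of each other and of the (C_j), satisfying E[e^{2λθX_j}] ≤ 1 + 2λθ·C·s_j for every j. Then E[exp(θ·(2s + Σ_j 2λ·C_j·X_j))] ≤ exp(2θs·(1 + C/c)). -/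
/-!
Write `r = 2λθ`. Pairing `C_j` with `X_j` keeps the family independent, so the moment generating
function of `∑ C_j X_j` at `r` factors. On `{C_j = 0}` the factor `exp (r C_j X_j)` is `1`, so
`E[exp (r C_j X_j)] = 1 + p_j E[exp (r X_j) - 1] ≤ 1 + r C p_j s_j ≤ exp (r C p_j s_j)`, and the
product of these bounds is at most `exp (2θC s / c)` by `∑ λ p_j s_j ≤ s / c`.
-/

open MeasureTheory ProbabilityTheory

section
variable {Ω : Type*} [MeasurableSpace Ω] {μ : Measure Ω}

lemma iIndepFun.prodMk_of_sumElim {ι β : Type*} [Fintype ι] [MeasurableSpace β]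
    {f g : ι → Ω → β} (hf : ∀ i, Measurable (f i)) (hg : ∀ i, Measurable (g i))
    (h : iIndepFun (Sum.elim f g) μ) :
    iIndepFun (fun i ω ↦ (f i ω, g i ω)) μ := by
  -- the joint law of the pairs is the product law of `Sum.elim f g` with its coordinates regrouped
  have := h.isProbabilityMeasure
  have hfg : ∀ k, Measurable (Sum.elim f g k) := Sum.forall.2 ⟨hf, hg⟩
  have hpair (i : ι) : μ.map (fun ω ↦ (f i ω, g i ω)) = (μ.map (f i)).prod (μ.map (g i)) :=
    (h.indepFun Sum.inl_ne_inr).map_prod_eq_prod_map_map (hf i).aemeasurable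
      (hg i).aemeasurable
  let e := (MeasurableEquiv.sumPiEquivProdPi fun _ : ι ⊕ ι ↦ β).trans
    (MeasurableEquiv.arrowProdEquivProdArrow β β ι).symm
  have he : (fun ω i ↦ (f i ω, g i ω)) = e ∘ fun ω k ↦ Sum.elim f g k ω := rfl
  rw [iIndepFun_iff_map_fun_eq_pi_map fun i ↦ ((hf i).prodMk (hg i)).aemeasurable, he,
    ← Measure.map_map e.measurable (measurable_pi_lambda _ hfg),
    h.map_fun_eq_pi_map fun k ↦ (hfg k).aemeasurable,
    ((measurePreserving_sumPiEquivProdPi _).trans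
      (measurePreserving_arrowProdEquivProdArrow β β ι _ _).symm).map_eq]
  simp_rw [hpair]
  rfl

lemma integral_eq_measureReal_of_zero_or_one {B : Ω → ℝ} (hB : Measurable B)
    (hB01 : ∀ ω, B ω = 0 ∨ B ω = 1) : μ[B] = μ.real {ω | B ω = 1} := by
  have : B = Set.indicator {ω | B ω = 1} 1 := by
    ext ω
    rcases hB01 ω with h | h <;> simp [Set.indicator, h]
  have hs : MeasurableSet {ω | B ω = 1} := hB (measurableSet_singleton 1)
  conv_lhs => rw [this]
  exact integral_indicator_one hs

lemma integral_sub_one_le [IsProbabilityMeasure μ] {f : Ω → ℝ} {a : ℝ} (ha : 0 ≤ a)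
    (hf : μ[f] ≤ 1 + a) : ∫ ω, (f ω - 1) ∂μ ≤ a := by
  by_cases hfi : Integrable f μ
  · rw [integral_sub hfi (integrable_const 1)]
    simp only [integral_const, probReal_univ, smul_eq_mul, one_mul]
    linarith
  · rw [integral_undef fun h ↦ hfi ((h.add (integrable_const 1)).congr
      (ae_of_all _ fun ω ↦ by simp))]
    exact ha

lemma mgf_mul_le_of_zero_or_one [IsProbabilityMeasure μ] {B Y : Ω → ℝ} {t a : ℝ}
    (hB : Measurable B) (hY : Measurable Y) (hB01 : ∀ ω, B ω = 0 ∨ B ω = 1)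
    (hBY : IndepFun B Y μ) (ha : 0 ≤ a) (hmgf : mgf Y μ t ≤ 1 + a) :
    mgf (B * Y) μ t ≤ 1 + μ[B] * a := by
  have hB0 : 0 ≤ μ[B] := integral_nonneg fun ω ↦ by rcases hB01 ω with h | h <;> simp [h]
  set h : Ω → ℝ := fun ω ↦ Real.exp (t * Y ω) - 1
  have hsplit (ω : Ω) : Real.exp (t * (B * Y) ω) = 1 + B ω * h ω := by
    rcases hB01 ω with hω | hω <;> simp [h, hω]
  have hBh : ∫ ω, B ω * h ω ∂μ = μ[B] * μ[h] :=
    (hBY.comp (ψ := fun y ↦ Real.exp (t * y) - 1) measurable_id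
      (by fun_prop)).integral_fun_mul_eq_mul_integral hB.aestronglyMeasurable
      (by fun_prop)
  have hh : μ[h] ≤ a := integral_sub_one_le ha hmgf
  by_cases hint : Integrable (fun ω ↦ Real.exp (t * (B * Y) ω)) μ
  · have hBhi : Integrable (fun ω ↦ B ω * h ω) μ :=
      (hint.sub (integrable_const 1)).congr (ae_of_all _ fun ω ↦ by
        simp only [Pi.sub_apply, hsplit ω]; ring)
    calc mgf (B * Y) μ t = 1 + μ[B] * μ[h] := by
          simp_rw [mgf, hsplit]
          rw [integral_add (integrable_const 1) hBhi, hBh]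
          simp
      _ ≤ 1 + μ[B] * a := by gcongr
  · rw [mgf, integral_undef hint]
    positivity

lemma mgf_mul_le_exp_of_zero_or_one [IsProbabilityMeasure μ] {B Y : Ω → ℝ} {t p a : ℝ}
    (hB : Measurable B) (hY : Measurable Y) (hB01 : ∀ ω, B ω = 0 ∨ B ω = 1)
    (hp : 0 ≤ p) (hBp : μ {ω | B ω = 1} = ENNReal.ofReal p)
    (hBY : IndepFun B Y μ) (ha : 0 ≤ a) (hmgf : mgf Y μ t ≤ 1 + a) :
    mgf (B * Y) μ t ≤ Real.exp (p * a) := by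
  have hmean : μ[B] = p := by
    rw [integral_eq_measureReal_of_zero_or_one hB hB01, measureReal_def, hBp,
      ENNReal.toReal_ofReal hp]
  calc mgf (B * Y) μ t ≤ 1 + μ[B] * a := mgf_mul_le_of_zero_or_one hB hY hB01 hBY ha hmgf
    _ = p * a + 1 := by rw [hmean]; ring
    _ ≤ Real.exp (p * a) := Real.add_one_le_exp _

end

theorem stmt_17_general {Ω : Type*} [MeasurableSpace Ω] (P : Measure Ω) [IsProbabilityMeasure P]
    {J : Type*} [Fintype J]
    (θ lam s c C : ℝ) (hθ : 0 < θ) (hlam : 0 < lam) (hC : 0 < C)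
    (p sc : J → ℝ) (hp0 : ∀ j, 0 ≤ p j) (hsc : ∀ j, 0 ≤ sc j)
    (hsum : ∑ j, lam * p j * sc j ≤ s / c)
    (Cb X : J → Ω → ℝ)
    (hCbmeas : ∀ j, Measurable (Cb j)) (hXmeas : ∀ j, Measurable (X j))
    (hCb01 : ∀ j ω, Cb j ω = 0 ∨ Cb j ω = 1)
    (hCbd : ∀ j, P {ω | Cb j ω = 1} = ENNReal.ofReal (p j))
    (hInd : iIndepFun (Sum.elim Cb X) P)
    (hmom : ∀ j, ∫ ω, Real.exp (2 * lam * θ * X j ω) ∂P ≤ 1 + 2 * lam * θ * C * sc j) :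
    ∫ ω, Real.exp (θ * (2 * s + ∑ j, 2 * lam * Cb j ω * X j ω)) ∂P
      ≤ Real.exp (2 * θ * s * (1 + C / c)) := by
  set r := 2 * lam * θ
  have hr : 0 ≤ r := by positivity
  have hIndProd : iIndepFun (fun j ↦ Cb j * X j) P :=
    (iIndepFun.prodMk_of_sumElim hCbmeas hXmeas hInd).comp (fun _ x ↦ x.1 * x.2)
      fun _ ↦ by fun_prop
  have hfactor (j : J) : mgf (Cb j * X j) P r ≤ Real.exp (p j * (r * C * sc j)) :=
    mgf_mul_le_exp_of_zero_or_one (hCbmeas j) (hXmeas j) (hCb01 j) (hp0 j) (hCbd j)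
      (hInd.indepFun Sum.inl_ne_inr) (mul_nonneg (mul_nonneg hr hC.le) (hsc j)) (hmom j)
  have hexponent : ∑ j, p j * (r * C * sc j) ≤ 2 * θ * C * (s / c) := by
    calc ∑ j, p j * (r * C * sc j) = 2 * θ * C * ∑ j, lam * p j * sc j := by
          rw [Finset.mul_sum]; exact Finset.sum_congr rfl fun j _ ↦ by ring
      _ ≤ 2 * θ * C * (s / c) := by gcongr
  calc ∫ ω, Real.exp (θ * (2 * s + ∑ j, 2 * lam * Cb j ω * X j ω)) ∂P
      = Real.exp (2 * θ * s) * mgf (∑ j, Cb j * X j) P r := by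
        rw [mgf, ← integral_const_mul]
        refine integral_congr_ae (ae_of_all _ fun ω ↦ ?_)
        simp only [r, Finset.sum_apply, Pi.mul_apply, ← Real.exp_add, mul_add, Finset.mul_sum]
        ring_nf
    _ = Real.exp (2 * θ * s) * ∏ j, mgf (Cb j * X j) P r := by
        rw [hIndProd.mgf_sum fun j ↦ (hCbmeas j).mul (hXmeas j)]
    _ ≤ Real.exp (2 * θ * s) * ∏ j, Real.exp (p j * (r * C * sc j)) := by
        gcongr with j
        · exact fun j _ ↦ mgf_nonneg
        · exact hfactor j
    _ = Real.exp (2 * θ * s + ∑ j, p j * (r * C * sc j)) := by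
        rw [Real.exp_add, Real.exp_sum]
    _ ≤ Real.exp (2 * θ * s * (1 + C / c)) := by
        gcongr
        linarith [show 2 * θ * s * (1 + C / c) = 2 * θ * s + 2 * θ * C * (s / c) by ring]

/-- Exponential moment bound: for independent Bernoulli variables `Cb j` (parameter `p j`)
and independent nonnegative variables `X j` with `E[exp(2λθ X j)] ≤ 1 + 2λθ C (sc j)`, and
`∑ λ (p j) (sc j) ≤ s/c`, one has
`E[exp(θ(2s + ∑ 2λ (Cb j) (X j)))] ≤ exp(2θs(1 + C/c))`. -/
theorem stmt_17 {Ω : Type*} [MeasurableSpace Ω] (P : Measure Ω) [IsProbabilityMeasure P]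
    {J : Type*} [Fintype J]
    (θ lam s c C : ℝ) (hθ : 0 < θ) (hlam : 0 < lam) (hs : 0 < s) (hc : 0 < c) (hC : 0 < C)
    (p sc : J → ℝ) (hp0 : ∀ j, 0 ≤ p j) (hp1 : ∀ j, p j ≤ 1) (hsc : ∀ j, 0 ≤ sc j)
    (hsum : ∑ j, lam * p j * sc j ≤ s / c)
    (Cb X : J → Ω → ℝ)
    (hCbmeas : ∀ j, Measurable (Cb j)) (hXmeas : ∀ j, Measurable (X j))
    (hCb01 : ∀ j ω, Cb j ω = 0 ∨ Cb j ω = 1)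
    (hCbd : ∀ j, P {ω | Cb j ω = 1} = ENNReal.ofReal (p j))
    (hXnonneg : ∀ j ω, 0 ≤ X j ω)
    (hInd : iIndepFun (Sum.elim Cb X) P)
    (hmom : ∀ j, ∫ ω, Real.exp (2 * lam * θ * X j ω) ∂P ≤ 1 + 2 * lam * θ * C * sc j) :
    ∫ ω, Real.exp (θ * (2 * s + ∑ j, 2 * lam * Cb j ω * X j ω)) ∂P
      ≤ Real.exp (2 * θ * s * (1 + C / c)) :=
  stmt_17_general P θ lam s c C hθ hlam hC p sc hp0 hsc hsum Cb X hCbmeas hXmeas hCb01 hCbd hInd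
    hmom
end
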